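/- arXiv:1208.4626 — 3 statements merged into one kernel-verified Lean document; each statement's English description precedes it below -/
import Mathlib

section
/- Let Λ be a nondegenerate integral lattice. For an overlattice Λ ⊆ Λ′ (a lattice embedding of equal rank), the subgroup H_{Λ′} = Λ′/Λ of the discriminant group A_Λ = Λ*/Λ is isotropic for the discriminant quadratic form, and the assignment Λ′ ↦ H_{Λ′} is a bijection between overlattices of Λ and isotropic subgroups of A_Λ. -/
open Matrix

variable {n : ℕ}

/-- An overlattice of the standard lattice `Λ ⊆ ℚⁿ` (with respect to a bilinear form
`q`): a subgroup `L'` of `ℚⁿ` containing `Λ` on which `q` is integer-valued.  (Such an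
`L'` automatically has the same rank as `Λ` since `L' ⊆ Λ*`.) -/
def IsOverlattice (q : (Fin n → ℚ) → (Fin n → ℚ) → ℚ)
    (Λ L' : AddSubgroup (Fin n → ℚ)) : Prop :=
  Λ ≤ L' ∧ ∀ x ∈ L', ∀ y ∈ L', ∃ k : ℤ, q x y = (k : ℚ)

/-- A subgroup `H` of the discriminant group `A_Λ = Λ*/Λ` is isotropic for the
discriminant form iff the form takes integer values on its preimage in `Λ*`. -/
def IsIsotropicSubgroup (q : (Fin n → ℚ) → (Fin n → ℚ) → ℚ)
    (Λ dual : AddSubgroup (Fin n → ℚ))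
    (H : AddSubgroup (dual ⧸ Λ.addSubgroupOf dual)) : Prop :=
  ∀ x y : dual,
    QuotientAddGroup.mk' (Λ.addSubgroupOf dual) x ∈ H →
    QuotientAddGroup.mk' (Λ.addSubgroupOf dual) y ∈ H →
    ∃ k : ℤ, q (x : Fin n → ℚ) (y : Fin n → ℚ) = (k : ℚ)

/-- The subgroup `H_{Λ'} = Λ'/Λ` of the discriminant group `A_Λ = Λ*/Λ`
associated to an overlattice `Λ'` of `Λ`. -/
def overlatticeToSubgroup (Λ dual L' : AddSubgroup (Fin n → ℚ)) :
    AddSubgroup (dual ⧸ Λ.addSubgroupOf dual) :=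
  AddSubgroup.map (QuotientAddGroup.mk' (Λ.addSubgroupOf dual))
    (L'.addSubgroupOf dual)

/-- **Nikulin, Proposition 1.4.1.** Let `Λ = ℤⁿ ⊆ ℚⁿ` be a
nondegenerate integral lattice with Gram matrix `G`, and `Λ* = dual` its dual
lattice, so that `A_Λ = Λ*/Λ` is the discriminant group. For any overlattice
`Λ ⊆ Λ'`, the subgroup `H_{Λ'} = Λ'/Λ ⊆ A_Λ` is isotropic for the discriminant
form, and `Λ' ↦ H_{Λ'}` is a bijection between overlattices of `Λ` and isotropic
subgroups of `A_Λ`. -/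
theorem overlattices_biject_with_isotropic_subgroups
    (G : Matrix (Fin n) (Fin n) ℤ) (hG : G.IsSymm) (hdet : G.det ≠ 0)
    (q : (Fin n → ℚ) → (Fin n → ℚ) → ℚ)
    (hq : ∀ x y, q x y = x ⬝ᵥ (G.map (Int.cast : ℤ → ℚ)).mulVec y)
    (Λ dual : AddSubgroup (Fin n → ℚ))
    (hΛ : ∀ x, x ∈ Λ ↔ ∀ i, ∃ k : ℤ, x i = (k : ℚ))
    (hdual : ∀ x, x ∈ dual ↔ ∀ y ∈ Λ, ∃ k : ℤ, q x y = (k : ℚ))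
    (hle : Λ ≤ dual) :
    (∀ L', IsOverlattice q Λ L' →
      IsIsotropicSubgroup q Λ dual (overlatticeToSubgroup Λ dual L')) ∧
    Set.BijOn (overlatticeToSubgroup Λ dual)
      {L' | IsOverlattice q Λ L'}
      {H | IsIsotropicSubgroup q Λ dual H} := by
  classical
  set mk := QuotientAddGroup.mk' (Λ.addSubgroupOf dual) with hmk
  -- symmetry of q
  have hsymm : ∀ x y, q x y = q y x := by
    intro x y
    have hT : (G.map (Int.cast : ℤ → ℚ))ᵀ = G.map (Int.cast : ℤ → ℚ) := by
      rw [← Matrix.transpose_map, hG.eq]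
    rw [hq, hq, dotProduct_mulVec, ← mulVec_transpose, hT, dotProduct_comm]
  have haddl : ∀ x y z, q (x + y) z = q x z + q y z := by
    intro x y z; simp [hq, add_dotProduct]
  have haddr : ∀ x y z, q x (y + z) = q x y + q x z := by
    intro x y z; simp [hq, mulVec_add, dotProduct_add]
  -- any overlattice lies in the dual
  have key : ∀ L', IsOverlattice q Λ L' → L' ≤ dual := by
    intro L' hL' x hx
    rw [hdual]
    intro y hy
    exact hL'.2 x hx y (hL'.1 hy)
  -- Part 1: image is isotropic
  have part1 : ∀ L', IsOverlattice q Λ L' →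
      IsIsotropicSubgroup q Λ dual (overlatticeToSubgroup Λ dual L') := by
    intro L' hL' x y hx hy
    obtain ⟨z, hz, hzx⟩ := hx
    obtain ⟨w, hw, hwy⟩ := hy
    have hxz : x - z ∈ Λ.addSubgroupOf dual := by
      have : mk (x - z) = 0 := by rw [map_sub, hzx, sub_self]
      rwa [hmk, QuotientAddGroup.mk'_apply, QuotientAddGroup.eq_zero_iff] at this
    have hyw : y - w ∈ Λ.addSubgroupOf dual := by
      have : mk (y - w) = 0 := by rw [map_sub, hwy, sub_self]
      rwa [hmk, QuotientAddGroup.mk'_apply, QuotientAddGroup.eq_zero_iff] at this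
    have hxz' : ((x : Fin n → ℚ) - z) ∈ Λ := hxz
    have hyw' : ((y : Fin n → ℚ) - w) ∈ Λ := hyw
    have hzL : (z : Fin n → ℚ) ∈ L' := hz
    have hwL : (w : Fin n → ℚ) ∈ L' := hw
    obtain ⟨k1, hk1⟩ := hL'.2 (z : Fin n → ℚ) hzL (w : Fin n → ℚ) hwL
    obtain ⟨k2, hk2⟩ := (hdual (z : Fin n → ℚ)).mp z.2 _ hyw'
    obtain ⟨k3, hk3⟩ := (hdual (w : Fin n → ℚ)).mp w.2 _ hxz'
    obtain ⟨k4, hk4⟩ := (hdual ((x : Fin n → ℚ) - z)).mp (hle hxz') _ hyw'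
    refine ⟨k1 + k2 + k3 + k4, ?_⟩
    have hx' : (x : Fin n → ℚ) = (z : Fin n → ℚ) + ((x : Fin n → ℚ) - z) := by ring
    have hy' : (y : Fin n → ℚ) = (w : Fin n → ℚ) + ((y : Fin n → ℚ) - w) := by ring
    rw [hx', hy', haddl, haddr, haddr]
    rw [hsymm ((x : Fin n → ℚ) - z) (w : Fin n → ℚ)] at *
    push_cast
    rw [hk1, hk2, hk3, hk4]
    ring
  -- recovering an overlattice from its subgroup
  have recover : ∀ L', IsOverlattice q Λ L' →
      L' = AddSubgroup.map dual.subtype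
        ((overlatticeToSubgroup Λ dual L').comap mk) := by
    intro L' hL'
    ext x
    constructor
    · intro hx
      have hxd : x ∈ dual := key L' hL' hx
      refine ⟨⟨x, hxd⟩, ?_, rfl⟩
      exact ⟨⟨x, hxd⟩, hx, rfl⟩
    · rintro ⟨z, hz, rfl⟩
      obtain ⟨w, hw, hwz⟩ := hz
      have hzw : z - w ∈ Λ.addSubgroupOf dual := by
        have : mk (z - w) = 0 := by rw [map_sub, hwz, sub_self]
        rwa [hmk, QuotientAddGroup.mk'_apply, QuotientAddGroup.eq_zero_iff] at this
      have hzw' : ((z : Fin n → ℚ) - w) ∈ L' := hL'.1 hzw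
      have hwL : (w : Fin n → ℚ) ∈ L' := hw
      have : ((z : Fin n → ℚ) - w) + w ∈ L' := AddSubgroup.add_mem _ hzw' hwL
      simpa using this
  refine ⟨part1, part1, ?_, ?_⟩
  · -- injectivity
    intro L1 h1 L2 h2 heq
    rw [recover L1 h1, recover L2 h2, heq]
  · -- surjectivity
    intro H hH
    set L' : AddSubgroup (Fin n → ℚ) := AddSubgroup.map dual.subtype (H.comap mk) with hL'def
    have hover : IsOverlattice q Λ L' := by
      constructor
      · intro a ha
        refine ⟨⟨a, hle ha⟩, ?_, rfl⟩
        have : mk ⟨a, hle ha⟩ = 0 := by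
          rw [hmk, QuotientAddGroup.mk'_apply, QuotientAddGroup.eq_zero_iff]
          exact ha
        simp only [SetLike.mem_coe, AddSubgroup.mem_comap, this]
        exact H.zero_mem
      · rintro x ⟨z, hz, rfl⟩ y ⟨w, hw, rfl⟩
        exact hH z w hz hw
    refine ⟨L', hover, ?_⟩
    have hsub : L'.addSubgroupOf dual = H.comap mk := by
      ext z
      constructor
      · rintro (hz : (z : Fin n → ℚ) ∈ L')
        obtain ⟨w, hw, hwz⟩ := hz
        have : w = z := Subtype.ext hwz
        rwa [this] at hw
      · intro hz
        exact ⟨z, hz, rfl⟩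
    show AddSubgroup.map mk (L'.addSubgroupOf dual) = H
    rw [hsub]
    exact AddSubgroup.map_comap_eq_self_of_surjective
      (QuotientAddGroup.mk'_surjective _) H
end

section
/- Let Λ be a nondegenerate integral lattice of signature (3, n−3) with n ≥ 5, and let v ∈ Λ be a primitive isotropic vector. Then there exists a primitive rank-2 sublattice K ⊆ Λ containing v whose Gram determinant equals −α² for some positive integer α dividing discr(Λ). -/
open Matrix

/-- A vector in `ℤⁿ` is primitive if it is not a nontrivial integer
multiple of another vector. -/
def IsPrimitiveVec {n : ℕ} (v : Fin n → ℤ) : Prop :=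
  ∀ (m : ℤ) (w : Fin n → ℤ), v = m • w → IsUnit m

/-- An integral Gram matrix `G` has signature `(p, m)`. -/
def HasSignature {n : ℕ} (G : Matrix (Fin n) (Fin n) ℤ) (p m : ℕ) : Prop :=
  ∃ Wp Wm : Submodule ℝ (Fin n → ℝ),
    Module.finrank ℝ Wp = p ∧ Module.finrank ℝ Wm = m ∧ Wp ⊔ Wm = ⊤ ∧
    (∀ x ∈ Wp, x ≠ 0 → 0 < x ⬝ᵥ (G.map (Int.cast : ℤ → ℝ)).mulVec x) ∧
    (∀ x ∈ Wm, x ≠ 0 → x ⬝ᵥ (G.map (Int.cast : ℤ → ℝ)).mulVec x < 0)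

/-- The saturation of a `ℤ`-submodule of `ℤⁿ`. -/
def satOf {n : ℕ} (S : Submodule ℤ (Fin n → ℤ)) : Submodule ℤ (Fin n → ℤ) where
  carrier := {x | ∃ m : ℤ, m ≠ 0 ∧ m • x ∈ S}
  add_mem' := by
    rintro a b ⟨m, hm, hma⟩ ⟨k, hk, hkb⟩
    refine ⟨m * k, mul_ne_zero hm hk, ?_⟩
    rw [smul_add]
    refine Submodule.add_mem _ ?_ ?_
    · rw [mul_comm, mul_smul]; exact S.smul_mem k hma
    · rw [mul_smul]; exact S.smul_mem m hkb
  zero_mem' := ⟨1, one_ne_zero, by simp⟩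
  smul_mem' := by
    rintro c a ⟨m, hm, hma⟩
    exact ⟨m, hm, by rw [smul_comm]; exact S.smul_mem c hma⟩

lemma mem_satOf {n : ℕ} {S : Submodule ℤ (Fin n → ℤ)} {x : Fin n → ℤ} :
    x ∈ satOf S ↔ ∃ m : ℤ, m ≠ 0 ∧ m • x ∈ S := Iff.rfl

/-- The linear form `x ↦ v ⬝ᵥ G *ᵥ x`. -/
def qform {n : ℕ} (G : Matrix (Fin n) (Fin n) ℤ) (v : Fin n → ℤ) :
    (Fin n → ℤ) →ₗ[ℤ] ℤ where
  toFun x := v ⬝ᵥ G.mulVec x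
  map_add' x y := by
    show v ⬝ᵥ G.mulVec (x + y) = v ⬝ᵥ G.mulVec x + v ⬝ᵥ G.mulVec y
    rw [Matrix.mulVec_add, dotProduct_add]
  map_smul' c x := by
    show v ⬝ᵥ G.mulVec (c • x) = c • (v ⬝ᵥ G.mulVec x)
    rw [Matrix.mulVec_smul, dotProduct_smul]

lemma qform_apply {n : ℕ} (G : Matrix (Fin n) (Fin n) ℤ) (v x : Fin n → ℤ) :
    qform G v x = v ⬝ᵥ G.mulVec x := rfl

/-- Let `Λ = ℤⁿ` be a nondegenerate integral lattice of signature
`(3, n-3)`, `n ≥ 5`, with Gram matrix `G`, and let `v` be a primitive isotropic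
vector.  Then there is a primitive rank-2 sublattice `K ⊆ Λ` containing `v`,
spanned by vectors `w₁, w₂`, whose Gram determinant equals `-α²` for some positive
integer `α` dividing `discr(Λ) = det G`. -/
theorem exists_primitive_rank_two_sublattice_containing_isotropic
    {n : ℕ} (hn : 5 ≤ n)
    (G : Matrix (Fin n) (Fin n) ℤ) (hG : G.IsSymm) (hdet : G.det ≠ 0)
    (hsig : HasSignature G 3 (n - 3))
    (v : Fin n → ℤ) (hv : IsPrimitiveVec v) (hiso : v ⬝ᵥ G.mulVec v = 0) :
    ∃ (w₁ w₂ : Fin n → ℤ) (α : ℤ),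
      0 < α ∧ α ∣ G.det ∧
      LinearIndependent ℤ ![w₁, w₂] ∧
      v ∈ Submodule.span ℤ ({w₁, w₂} : Set (Fin n → ℤ)) ∧
      -- primitivity of `K = span(w₁, w₂)`: `Λ/K` is torsion-free
      (∀ (m : ℤ) (x : Fin n → ℤ), m ≠ 0 →
        m • x ∈ Submodule.span ℤ ({w₁, w₂} : Set (Fin n → ℤ)) →
        x ∈ Submodule.span ℤ ({w₁, w₂} : Set (Fin n → ℤ))) ∧
      Matrix.det !![w₁ ⬝ᵥ G.mulVec w₁, w₁ ⬝ᵥ G.mulVec w₂;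
                    w₂ ⬝ᵥ G.mulVec w₁, w₂ ⬝ᵥ G.mulVec w₂] = -α ^ 2 := by
  classical
  -- `v ≠ 0`
  have hv0 : v ≠ 0 := by
    intro h
    have := hv 0 0 (by simp [h])
    simp at this
  -- a vector `u` with `v ⬝ᵥ u = 1`, from primitivity
  obtain ⟨u, hu⟩ : ∃ u : Fin n → ℤ, v ⬝ᵥ u = 1 := by
    have htop : Ideal.span (Set.range v) = ⊤ := by
      by_contra h
      obtain ⟨Mx, hMx, hle⟩ := Ideal.exists_le_maximal _ h
      obtain ⟨p, hp⟩ := (IsPrincipalIdealRing.principal Mx).principal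
      have hpd : ∀ i, p ∣ v i := fun i => by
        have : v i ∈ Mx := hle (Ideal.subset_span ⟨i, rfl⟩)
        rw [hp, Submodule.mem_span_singleton] at this
        obtain ⟨a, ha⟩ := this
        exact ⟨a, by rw [← ha, smul_eq_mul, mul_comm]⟩
      have hvp : v = p • fun i => v i / p := by
        funext i
        simp only [Pi.smul_apply, smul_eq_mul]
        exact (Int.mul_ediv_cancel' (hpd i)).symm
      have hup := hv p _ hvp
      refine hMx.ne_top ?_
      rw [hp]
      exact Ideal.span_singleton_eq_top.mpr hup
    have h1 : (1 : ℤ) ∈ Ideal.span (Set.range v) := htop ▸ trivial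
    obtain ⟨c, hc⟩ := Submodule.mem_span_range_iff_exists_fun ℤ |>.mp h1
    exact ⟨c, by rw [dotProduct]; simpa [mul_comm] using hc⟩
  set L := qform G v with hLdef
  have hLv : L v = 0 := hiso
  -- the auxiliary vector `f` with `q(v, f) = det G`
  set f : Fin n → ℤ := (G.adjugate).mulVec u with hf
  have hLf : L f = G.det := by
    rw [hLdef, qform_apply, hf, Matrix.mulVec_mulVec, Matrix.mul_adjugate,
      Matrix.smul_mulVec, Matrix.one_mulVec, dotProduct_smul]
    simp [hu]
  -- symmetry of the form
  have hsymm : ∀ x y : Fin n → ℤ, x ⬝ᵥ G.mulVec y = y ⬝ᵥ G.mulVec x := by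
    intro x y
    rw [Matrix.dotProduct_mulVec, ← Matrix.mulVec_transpose, hG.eq, dotProduct_comm]
  -- the saturation of `span {v, f}`
  set S : Submodule ℤ (Fin n → ℤ) := Submodule.span ℤ ({v, f} : Set (Fin n → ℤ)) with hS
  set K : Submodule ℤ (Fin n → ℤ) := satOf S with hK
  have hvK : v ∈ K := mem_satOf.mpr ⟨1, one_ne_zero, by
    rw [one_smul]; exact Submodule.subset_span (Set.mem_insert v {f})⟩
  have hfK : f ∈ K := mem_satOf.mpr ⟨1, one_ne_zero, by
    rw [one_smul]; exact Submodule.subset_span (Set.mem_insert_of_mem v rfl)⟩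
  -- the ideal of values of `q(v, ·)` on `K`
  set J : Ideal ℤ := Submodule.map L K with hJ
  have hdJ : G.det ∈ J := ⟨f, hfK, hLf⟩
  obtain ⟨β, hβ⟩ := (IsPrincipalIdealRing.principal J).principal
  have hβdvd : β ∣ G.det := by
    rw [hβ, Submodule.mem_span_singleton] at hdJ
    obtain ⟨a, ha⟩ := hdJ
    exact ⟨a, by rw [← ha, smul_eq_mul, mul_comm]⟩
  have hβ0 : β ≠ 0 := by
    rintro rfl
    exact hdet (by simpa using hβdvd)
  obtain ⟨w, hwK, hLw⟩ : ∃ w ∈ K, L w = β := by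
    have hmem : β ∈ J := hβ ▸ Submodule.subset_span rfl
    exact hmem
  -- the key claim: `K ⊆ span {v, w}`
  have key : ∀ x ∈ K, x ∈ Submodule.span ℤ ({v, w} : Set (Fin n → ℤ)) := by
    intro x hx
    obtain ⟨m, hm, hmx⟩ := mem_satOf.mp hx
    obtain ⟨c, hc⟩ : ∃ c : ℤ, L x = c * β := by
      have hmem : L x ∈ J := ⟨x, hx, rfl⟩
      rw [hβ, Submodule.mem_span_singleton] at hmem
      obtain ⟨c, hc⟩ := hmem
      exact ⟨c, by rw [← hc, smul_eq_mul]⟩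
    have hLy : L (x - c • w) = 0 := by
      rw [map_sub, LinearMap.map_smul, hLw, hc, smul_eq_mul, sub_self]
    obtain ⟨a, b, hab⟩ := Submodule.mem_span_pair.mp hmx
    obtain ⟨m₂, hm₂, hmw⟩ := mem_satOf.mp hwK
    obtain ⟨a₂, b₂, hab₂⟩ := Submodule.mem_span_pair.mp hmw
    have heq : (m * m₂) • (x - c • w)
        = (m₂ * a - m * c * a₂) • v + (m₂ * b - m * c * b₂) • f :=
      calc (m * m₂) • (x - c • w) = m₂ • (m • x) - (m * c) • (m₂ • w) := by module
        _ = m₂ • (a • v + b • f) - (m * c) • (a₂ • v + b₂ • f) := by rw [hab, hab₂]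
        _ = (m₂ * a - m * c * a₂) • v + (m₂ * b - m * c * b₂) • f := by module
    have hB : m₂ * b - m * c * b₂ = 0 := by
      have hLeq := congrArg L heq
      rw [LinearMap.map_smul, hLy, smul_zero, map_add, LinearMap.map_smul,
        LinearMap.map_smul, hLv, hLf, smul_zero, zero_add, smul_eq_mul] at hLeq
      exact (mul_eq_zero.mp hLeq.symm).resolve_right hdet
    have heq2 : (m * m₂) • (x - c • w) = (m₂ * a - m * c * a₂) • v := by
      rw [heq, hB, zero_smul, add_zero]
    have hA : m₂ * a - m * c * a₂ = (m * m₂) * ((x - c • w) ⬝ᵥ u) := by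
      have hd := congrArg (fun z => z ⬝ᵥ u) heq2
      simp only [smul_dotProduct, smul_eq_mul, hu, mul_one] at hd
      exact hd.symm
    have hyv : x - c • w = ((x - c • w) ⬝ᵥ u) • v := by
      have hmm : (m * m₂) ≠ 0 := mul_ne_zero hm hm₂
      apply smul_right_injective (Fin n → ℤ) hmm
      show (m * m₂) • (x - c • w) = (m * m₂) • (((x - c • w) ⬝ᵥ u) • v)
      rw [heq2, hA, mul_smul]
    refine Submodule.mem_span_pair.mpr ⟨(x - c • w) ⬝ᵥ u, c, ?_⟩
    rw [← hyv]
    abel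
  have hspanK : Submodule.span ℤ ({v, w} : Set (Fin n → ℤ)) ≤ K := by
    rw [Submodule.span_le]
    rintro z (rfl | rfl)
    · exact hvK
    · exact hwK
  refine ⟨v, w, |β|, abs_pos.mpr hβ0, (abs_dvd _ _).mpr hβdvd, ?_, ?_, ?_, ?_⟩
  · rw [LinearIndependent.pair_iff]
    intro s t hst
    have hL0 := congrArg L hst
    rw [map_add, LinearMap.map_smul, LinearMap.map_smul, hLv, hLw, smul_zero,
      zero_add, map_zero, smul_eq_mul] at hL0
    have ht : t = 0 := (mul_eq_zero.mp hL0).resolve_right hβ0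
    subst ht
    rw [zero_smul, add_zero] at hst
    exact ⟨(smul_eq_zero.mp hst).resolve_right hv0, rfl⟩
  · exact Submodule.subset_span (Set.mem_insert v {w})
  · intro m x hm hmx
    have hxK : x ∈ K := by
      obtain ⟨m', hm', hm'x⟩ := mem_satOf.mp (hspanK hmx)
      exact mem_satOf.mpr ⟨m' * m, mul_ne_zero hm' hm, by rwa [mul_smul]⟩
    exact key x hxK
  · have h21 : w ⬝ᵥ G.mulVec v = β := by rw [hsymm]; exact hLw
    rw [Matrix.det_fin_two_of, hiso, h21, zero_mul, zero_sub]
    have h12 : v ⬝ᵥ G.mulVec w = β := hLw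
    rw [h12]
    have habs : |β| ^ 2 = β * β := by rw [sq_abs, sq]
    rw [habs]
end

section
/- Let q be a nondegenerate symmetric bilinear form of signature (1, k), k ≥ 2, on a rational vector space N, and let L ∈ N be a nonzero vector with q(L, L) = 0. Then the set of vectors L′ ∈ N with q(L′, L′) < 0 and such that the span of L and L′ has rank 2 and q restricted to span(L, L′) is degenerate or nondegenerate of signature (0,1) or (1,1), is nonempty; moreover the collection of q-orthogonal complements ⟨L, L′⟩^⊥ over all such L′ with q(L′,L′)<0 has dense union of the corresponding real subspaces in L^⊥ ⊗ ℝ. -/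
/-!
Rational points are dense in every real hyperplane defined over `ℚ`: the orthogonal projection
onto it maps the dense set `ℚ^d` onto a dense subset of rational vectors. Hence the rational
vectors `y ∈ L^⊥` are dense in `L^⊥ ⊗ ℝ`, and it suffices to find, for each such `y`, a rational
negative vector `L' ∈ y^⊥`. The real hyperplane `y^⊥` meets the negative definite subspace (of
dimension at least 2) in a nonzero vector, which lies in the open negative cone; density of the
rational points of `y^⊥` then yields `L'`. Since `L` is isotropic and `L'` is not, they are
linearly independent, and the Gram determinant of `(L, L')` is `-q(L, L')² ≤ 0`.
-/

open Matrix

variable {d : ℕ}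

/-- The rational bilinear form on `ℚ^d` with Gram matrix `Q`. -/
def qQ (Q : Matrix (Fin d) (Fin d) ℚ) (x y : Fin d → ℚ) : ℚ :=
  x ⬝ᵥ Q.mulVec y

/-- The real bilinear form extending `qQ`. -/
def qR (Q : Matrix (Fin d) (Fin d) ℚ) (x y : Fin d → ℝ) : ℝ :=
  x ⬝ᵥ (Q.map (Rat.cast : ℚ → ℝ)).mulVec y

/-- The real vector associated to a rational vector. -/
def ratVec (v : Fin d → ℚ) : Fin d → ℝ := fun i => (v i : ℝ)

theorem ratVec_dotProduct (a b : Fin d → ℚ) : ratVec a ⬝ᵥ ratVec b = ((a ⬝ᵥ b : ℚ) : ℝ) := by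
  simp [ratVec, dotProduct]

theorem qR_ratVec_left (Q : Matrix (Fin d) (Fin d) ℚ) (a : Fin d → ℚ) (z : Fin d → ℝ) :
    qR Q (ratVec a) z = ratVec (a ᵥ* Q) ⬝ᵥ z := by
  rw [qR, dotProduct_mulVec]
  congr 1
  ext i
  simp [ratVec, vecMul, dotProduct]

theorem qR_ratVec_right (Q : Matrix (Fin d) (Fin d) ℚ) (z : Fin d → ℝ) (a : Fin d → ℚ) :
    qR Q z (ratVec a) = z ⬝ᵥ ratVec (Q *ᵥ a) := by
  rw [qR]
  congr 1
  ext i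
  simp [ratVec, mulVec, dotProduct]

theorem qR_ratVec (Q : Matrix (Fin d) (Fin d) ℚ) (a b : Fin d → ℚ) :
    qR Q (ratVec a) (ratVec b) = qQ Q a b := by
  rw [qR_ratVec_right, ratVec_dotProduct, qQ]

theorem denseRange_ratVec : DenseRange (ratVec (d := d)) :=
  DenseRange.piMap fun _ => Rat.denseRange_cast

theorem continuous_qR_self (Q : Matrix (Fin d) (Fin d) ℚ) : Continuous fun z => qR Q z z := by
  unfold qR; fun_prop

theorem subset_closure_ratVec_dotProduct_eq_zero (c : Fin d → ℚ) :
    {z : Fin d → ℝ | z ⬝ᵥ ratVec c = 0} ⊆ closure (ratVec '' {w | w ⬝ᵥ c = 0}) := by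
  intro z hz
  -- orthogonal projection onto `c^⊥`; for `c = 0` the division by zero makes it the identity
  set P : (Fin d → ℝ) → Fin d → ℝ :=
    fun y => y - ((y ⬝ᵥ ratVec c) / (ratVec c ⬝ᵥ ratVec c)) • ratVec c
  have hP : Continuous P := by fun_prop
  have hPrat : P '' Set.range ratVec ⊆ ratVec '' {w | w ⬝ᵥ c = 0} := by
    rintro _ ⟨_, ⟨w, rfl⟩, rfl⟩
    refine ⟨w - ((w ⬝ᵥ c) / (c ⬝ᵥ c)) • c, ?_, ?_⟩
    · by_cases hc : c = 0
      · simp [hc]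
      · simp [sub_dotProduct, div_mul_cancel₀ _ (dotProduct_self_eq_zero.not.mpr hc)]
    · ext i; simp [P, ratVec_dotProduct, ratVec]
  have hPz : P z = z := by simp [P, show z ⬝ᵥ ratVec c = 0 from hz]
  rw [← hPz]
  exact closure_mono hPrat (mem_closure_image hP.continuousAt (denseRange_ratVec z))

theorem Submodule.exists_ne_zero_mem_ker_of_one_lt_finrank {K V : Type*} [Field K]
    [AddCommGroup V] [Module K V] (W : Submodule K V) [FiniteDimensional K W]
    (hW : 1 < Module.finrank K W) (φ : V →ₗ[K] K) : ∃ v ∈ W, v ≠ 0 ∧ φ v = 0 := by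
  have hker : LinearMap.ker (φ ∘ₗ W.subtype) ≠ ⊥ :=
    LinearMap.ker_ne_bot_of_finrank_lt (by rwa [Module.finrank_self])
  obtain ⟨v, hv, hv0⟩ := Submodule.exists_mem_ne_zero_of_ne_bot hker
  exact ⟨v, v.2, by simpa using hv0, hv⟩

theorem exists_qQ_self_neg_and_qQ_eq_zero (Q : Matrix (Fin d) (Fin d) ℚ)
    (W : Submodule ℝ (Fin d → ℝ)) (hW : 1 < Module.finrank ℝ W)
    (hneg : ∀ x ∈ W, x ≠ 0 → qR Q x x < 0) (a : Fin d → ℚ) :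
    ∃ b : Fin d → ℚ, qQ Q b b < 0 ∧ qQ Q a b = 0 := by
  obtain ⟨v, hvW, hv0, hav⟩ := W.exists_ne_zero_mem_ker_of_one_lt_finrank hW
    (Matrix.toLinearMap₂' ℝ (Q.map Rat.cast) (ratVec a))
  rw [Matrix.toLinearMap₂'_apply', ← qR, qR_ratVec_left, dotProduct_comm] at hav
  obtain ⟨_, hneg_b, b, hab, rfl⟩ := mem_closure_iff.mp
    (subset_closure_ratVec_dotProduct_eq_zero (a ᵥ* Q) hav) _
    (isOpen_lt (continuous_qR_self Q) continuous_const) (hneg v hvW hv0)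
  rw [Set.mem_ofPred_eq, qR_ratVec] at hneg_b
  exact ⟨b, by exact_mod_cast hneg_b, by rwa [qQ, dotProduct_mulVec, dotProduct_comm]⟩

theorem linearIndependent_of_isotropic_of_anisotropic (Q : Matrix (Fin d) (Fin d) ℚ)
    {a b : Fin d → ℚ} (ha : a ≠ 0) (haa : qQ Q a a = 0) (hbb : qQ Q b b ≠ 0) :
    LinearIndependent ℚ ![a, b] := by
  have hsmul (c : ℚ) : qQ Q (c • b) (c • b) = c ^ 2 * qQ Q b b := by
    simp only [qQ, mulVec_smul, smul_dotProduct, dotProduct_smul, smul_eq_mul]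
    ring
  rw [linearIndependent_fin2]
  simp only [Matrix.cons_val_one, Matrix.cons_val_zero]
  refine ⟨fun hb => hbb (by simp [hb, qQ]), fun c hc => ha ?_⟩
  have hc0 : c = 0 := by
    have h := hsmul c
    rw [hc, haa, eq_comm, mul_eq_zero] at h
    simpa [hbb] using h
  rw [← hc, hc0, zero_smul]

theorem negative_vectors_with_dense_orthogonal_complements_general
    (k : ℕ) (hk : 2 ≤ k)
    (Q : Matrix (Fin d) (Fin d) ℚ)
    (Wm : Submodule ℝ (Fin d → ℝ))
    (hWm : Module.finrank ℝ Wm = k)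
    (hneg : ∀ x ∈ Wm, x ≠ 0 → qR Q x x < 0)
    (L : Fin d → ℚ) (hL : L ≠ 0) (hLiso : qQ Q L L = 0) :
    (∃ L' : Fin d → ℚ, qQ Q L' L' < 0 ∧ LinearIndependent ℚ ![L, L'] ∧
      qQ Q L L * qQ Q L' L' - qQ Q L L' ^ 2 ≤ 0) ∧
    ∀ x : Fin d → ℝ, qR Q x (ratVec L) = 0 →
      x ∈ closure {y : Fin d → ℝ | qR Q y (ratVec L) = 0 ∧
        ∃ L' : Fin d → ℚ, qQ Q L' L' < 0 ∧ LinearIndependent ℚ ![L, L'] ∧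
          qR Q y (ratVec L') = 0} := by
  have hneg_orth := exists_qQ_self_neg_and_qQ_eq_zero Q Wm (by omega) hneg
  have hindep {L' : Fin d → ℚ} (hL' : qQ Q L' L' < 0) : LinearIndependent ℚ ![L, L'] :=
    linearIndependent_of_isotropic_of_anisotropic Q hL hLiso hL'.ne
  constructor
  · obtain ⟨L', hL', -⟩ := hneg_orth L
    exact ⟨L', hL', hindep hL', by rw [hLiso, zero_mul, zero_sub, neg_nonpos]; positivity⟩
  · intro x hx
    rw [qR_ratVec_right] at hx
    refine closure_mono ?_ (subset_closure_ratVec_dotProduct_eq_zero (Q *ᵥ L) hx)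
    rintro _ ⟨y, hyL, rfl⟩
    obtain ⟨L', hL', hyL'⟩ := hneg_orth y
    refine ⟨?_, L', hL', hindep hL', ?_⟩
    · rw [qR_ratVec]; exact_mod_cast hyL
    · rw [qR_ratVec, hyL', Rat.cast_zero]

/-- Let `q` be a nondegenerate symmetric bilinear form of signature
`(1, k)`, `k ≥ 2`, on a rational vector space `N`, and let `L ≠ 0` be isotropic.
Then there exists `L'` with `q(L',L') < 0` such that `span(L, L')` has rank 2 (and
the restriction of `q` to it is degenerate or of signature `(0,1)` or `(1,1)`,
i.e. its Gram determinant is `≤ 0`); moreover, the union of the real subspaces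
`⟨L, L'⟩^⊥ ⊗ ℝ` over all such negative vectors `L'` is dense in `L^⊥ ⊗ ℝ`. -/
theorem negative_vectors_with_dense_orthogonal_complements
    (k : ℕ) (hk : 2 ≤ k) (hd : d = k + 1)
    (Q : Matrix (Fin d) (Fin d) ℚ) (hQ : Q.IsSymm) (hdet : Q.det ≠ 0)
    (Wp Wm : Submodule ℝ (Fin d → ℝ))
    (hWp : Module.finrank ℝ Wp = 1) (hWm : Module.finrank ℝ Wm = k)
    (hspan : Wp ⊔ Wm = ⊤)
    (hpos : ∀ x ∈ Wp, x ≠ 0 → 0 < qR Q x x)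
    (hneg : ∀ x ∈ Wm, x ≠ 0 → qR Q x x < 0)
    (L : Fin d → ℚ) (hL : L ≠ 0) (hLiso : qQ Q L L = 0) :
    (∃ L' : Fin d → ℚ, qQ Q L' L' < 0 ∧ LinearIndependent ℚ ![L, L'] ∧
      qQ Q L L * qQ Q L' L' - qQ Q L L' ^ 2 ≤ 0) ∧
    ∀ x : Fin d → ℝ, qR Q x (ratVec L) = 0 →
      x ∈ closure {y : Fin d → ℝ | qR Q y (ratVec L) = 0 ∧
        ∃ L' : Fin d → ℚ, qQ Q L' L' < 0 ∧ LinearIndependent ℚ ![L, L'] ∧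
          qR Q y (ratVec L') = 0} :=
  negative_vectors_with_dense_orthogonal_complements_general k hk Q Wm hWm hneg L hL hLiso
end
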